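/- arXiv:2505.02297 — 3 statements merged into one kernel-verified Lean document; each statement's English description precedes it below -/
import Mathlib

section
/- Let {E_{α,k}} (α = 1,…,N, k = 1,…,M) be a family of d×d positive semidefinite matrices satisfying tr(E_{α,k}) = d/M, tr(E_{α,k}²) = x, tr(E_{α,k}E_{α,l}) = (d−Mx)/(M(M−1)) for k ≠ l, tr(E_{α,k}E_{β,l}) = d/M² for α ≠ β, with N(M−1) = d²−1 and d/M² < x ≤ min{d²/M², d/M}. Then for any complex d×d matrix σ: Σ_{α=1}^N Σ_{k=1}^M |tr(E_{α,k}σ)|² = [d(M²x−d)·tr(σσ†) + (d³−M²x)·|tr σ|²] / (dM(M−1)). -/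
open Matrix
open scoped ComplexOrder

lemma aux_traceCTmul_zero {n : ℕ} (A : Matrix (Fin n) (Fin n) ℂ)
    (h : (Aᴴ * A).trace = 0) : A = 0 := by
  have key : (Aᴴ * A).trace = ((∑ j, ∑ i, Complex.normSq (A i j) : ℝ) : ℂ) := by
    simp only [Matrix.trace, Matrix.diag, Matrix.mul_apply, Matrix.conjTranspose_apply]
    push_cast
    refine Finset.sum_congr rfl fun j _ => Finset.sum_congr rfl fun i _ => ?_
    rw [Complex.normSq_eq_conj_mul_self]
    rfl
  rw [key] at h
  have h2 : (∑ j, ∑ i, Complex.normSq (A i j) : ℝ) = 0 := by exact_mod_cast h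
  ext i j
  have := (Finset.sum_eq_zero_iff_of_nonneg (fun j _ => Finset.sum_nonneg
    (fun i _ => Complex.normSq_nonneg _))).mp h2 j (Finset.mem_univ j)
  have := (Finset.sum_eq_zero_iff_of_nonneg (fun i _ => Complex.normSq_nonneg _)).mp
    this i (Finset.mem_univ i)
  simpa using Complex.normSq_eq_zero.mp this

lemma aux_trace_smulRight {V : Type*} [AddCommGroup V] [Module ℂ V]
    [Module.Free ℂ V] [Module.Finite ℂ V] (φ : V →ₗ[ℂ] ℂ) (v : V) :
    LinearMap.trace ℂ V (φ.smulRight v) = φ v := by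
  have : φ.smulRight v = dualTensorHom ℂ V V (φ ⊗ₜ v) := by ext a; simp
  rw [this, LinearMap.trace_eq_contract_apply, contractLeft_apply]

lemma frame_lemma {d : ℕ} (hd : 0 < d) {ι : Type*} [Fintype ι]
    (F : ι → Matrix (Fin d) (Fin d) ℂ) (c : ℂ) (hc : c ≠ 0)
    (htrF : ∀ i, (F i).trace = 0)
    (heig : ∀ j, ∑ i, ((F i) * (F j)).trace • F i = c • F j)
    (hcard : ∑ i, ((F i) * (F i)).trace = ((d ^ 2 - 1 : ℕ) : ℂ) * c)
    (A : Matrix (Fin d) (Fin d) ℂ) :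
    ∑ i, ((F i * A).trace) • F i = c • A - (c * A.trace / (d : ℂ)) • 1 := by
  haveI : Nonempty (Fin d) := Fin.pos_iff_nonempty.mp hd
  set T : Matrix (Fin d) (Fin d) ℂ →ₗ[ℂ] Matrix (Fin d) (Fin d) ℂ :=
    ∑ i, ((Matrix.traceLinearMap (Fin d) ℂ ℂ).comp (LinearMap.mulLeft ℂ (F i))).smulRight (F i)
    with hTdef
  have hT : ∀ B, T B = ∑ i, ((F i * B).trace) • F i := by
    intro B
    simp [hTdef, LinearMap.sum_apply]
  have hTF : ∀ j, T (F j) = c • F j := fun j => (hT (F j)).trans (heig j)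
  have hTT : T ∘ₗ T = c • T := by
    ext1 B
    rw [LinearMap.comp_apply, LinearMap.smul_apply]
    conv_lhs => rw [hT B]
    rw [map_sum, hT B, Finset.smul_sum]
    refine Finset.sum_congr rfl fun i _ => ?_
    rw [LinearMap.map_smul, hTF i, smul_comm]
  have htrT : LinearMap.trace ℂ _ T = ((d ^ 2 - 1 : ℕ) : ℂ) * c := by
    rw [hTdef, map_sum, ← hcard]
    exact Finset.sum_congr rfl fun i _ => (aux_trace_smulRight _ _)
  set Q : Matrix (Fin d) (Fin d) ℂ →ₗ[ℂ] Matrix (Fin d) (Fin d) ℂ := c⁻¹ • T with hQdef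
  have hQQ : Q ∘ₗ Q = Q := by
    rw [hQdef, LinearMap.smul_comp, LinearMap.comp_smul, hTT, smul_smul, smul_smul]
    congr 1
    field_simp
  obtain ⟨p, hp⟩ := (LinearMap.isProj_iff_isIdempotentElem Q).mpr hQQ
  have hpr : LinearMap.range Q = p := by
    refine le_antisymm ?_ fun x hx => ⟨x, hp.map_id x hx⟩
    rintro y ⟨x, rfl⟩
    exact hp.map_mem x
  have htrQ : LinearMap.trace ℂ _ Q = (Module.finrank ℂ p : ℂ) := hp.trace
  have hfinp : Module.finrank ℂ p = d ^ 2 - 1 := by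
    have h2 : LinearMap.trace ℂ _ Q = ((d ^ 2 - 1 : ℕ) : ℂ) := by
      rw [hQdef, LinearMap.map_smul, htrT, smul_eq_mul]
      field_simp
    rw [h2] at htrQ
    exact_mod_cast htrQ.symm
  have hdim : Module.finrank ℂ (Matrix (Fin d) (Fin d) ℂ) = d * d := by
    simp [Module.finrank_matrix]
  have hsq : d ^ 2 = d * d := by ring
  have hker : Module.finrank ℂ (LinearMap.ker Q) = 1 := by
    have h := LinearMap.finrank_range_add_finrank_ker Q
    rw [hdim, hpr, hfinp] at h
    rw [hsq] at h
    have hd1 : 1 ≤ d * d := Nat.one_le_iff_ne_zero.mpr (by positivity)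
    omega
  have hT1 : T 1 = 0 := by
    rw [hT]
    simp [htrF]
  have hone : (1 : Matrix (Fin d) (Fin d) ℂ) ∈ LinearMap.ker Q := by
    rw [LinearMap.mem_ker, hQdef, LinearMap.smul_apply, hT1, smul_zero]
  have h1ne : (1 : Matrix (Fin d) (Fin d) ℂ) ≠ 0 := one_ne_zero
  have hspan : Submodule.span ℂ {(1 : Matrix (Fin d) (Fin d) ℂ)} = LinearMap.ker Q := by
    refine Submodule.eq_of_le_of_finrank_le ?_ ?_
    · rwa [Submodule.span_singleton_le_iff_mem]
    · rw [hker, finrank_span_singleton h1ne]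
  have hAker : A - Q A ∈ LinearMap.ker Q := by
    rw [LinearMap.mem_ker, map_sub, ← LinearMap.comp_apply, hQQ, sub_self]
  rw [← hspan, Submodule.mem_span_singleton] at hAker
  obtain ⟨z, hz⟩ := hAker
  have htrTA : (T A).trace = 0 := by
    rw [hT, Matrix.trace_sum]
    simp [Matrix.trace_smul, htrF]
  have htrQA : (Q A).trace = 0 := by
    rw [hQdef, LinearMap.smul_apply, Matrix.trace_smul, htrTA, smul_zero]
  have hdC : ((d : ℕ) : ℂ) ≠ 0 := Nat.cast_ne_zero.mpr hd.ne'
  have hzd : z * (d : ℂ) = A.trace := by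
    have h3 := congrArg Matrix.trace hz
    rw [Matrix.trace_sub, htrQA, sub_zero, Matrix.trace_smul, Matrix.trace_one] at h3
    simpa [Fintype.card_fin, smul_eq_mul] using h3
  have hzval : z = A.trace / (d : ℂ) := by
    field_simp
    exact hzd
  have hQA : Q A = A - (A.trace / (d : ℂ)) • 1 := by
    rw [← hzval, eq_sub_iff_add_eq, add_comm, hz]
    abel
  have hTQ : T A = c • Q A := by
    rw [hQdef, LinearMap.smul_apply, smul_smul, mul_inv_cancel₀ hc, one_smul]
  rw [← hT, hTQ, hQA, smul_sub, smul_smul, mul_div_assoc]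

set_option maxHeartbeats 1600000 in
/-- Lemma 1: value of ∑ |tr(E_{α,k} σ)|² for an arbitrary linear operator σ. -/
theorem povm_trace_sum_sq (d N M : ℕ) (hd : 2 ≤ d) (hM : 2 ≤ M)
    (hNM : N * (M - 1) = d ^ 2 - 1)
    (x : ℝ) (hx1 : (d : ℝ) / M ^ 2 < x)
    (hx2 : x ≤ min ((d : ℝ) ^ 2 / M ^ 2) ((d : ℝ) / M))
    (E : Fin N → Fin M → Matrix (Fin d) (Fin d) ℂ)
    (hpsd : ∀ α k, (E α k).PosSemidef)
    (htr : ∀ α k, (E α k).trace = (((d : ℝ) / M : ℝ) : ℂ))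
    (htr2 : ∀ α k, (E α k * E α k).trace = (x : ℂ))
    (htrkl : ∀ α k l, k ≠ l →
      (E α k * E α l).trace = ((((d : ℝ) - M * x) / (M * (M - 1)) : ℝ) : ℂ))
    (htrab : ∀ α β k l, α ≠ β →
      (E α k * E β l).trace = (((d : ℝ) / M ^ 2 : ℝ) : ℂ))
    (σ : Matrix (Fin d) (Fin d) ℂ) :
    ∑ α, ∑ k, ‖(E α k * σ).trace‖ ^ 2 =
      ((d : ℝ) * ((M : ℝ) ^ 2 * x - d) * (σ * σᴴ).trace.re
        + ((d : ℝ) ^ 3 - (M : ℝ) ^ 2 * x) * ‖σ.trace‖ ^ 2) /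
      ((d : ℝ) * M * ((M : ℝ) - 1)) := by
  classical
  have hd0 : 0 < d := by omega
  have hM0R : (M : ℝ) ≠ 0 := by positivity
  have hM2R : (2 : ℝ) ≤ (M : ℝ) := by exact_mod_cast hM
  have hM1R : (M : ℝ) - 1 ≠ 0 := by linarith
  have hdR : (d : ℝ) ≠ 0 := by positivity
  have hM0C : (M : ℂ) ≠ 0 := by exact_mod_cast hM0R
  have hdC : (d : ℂ) ≠ 0 := by exact_mod_cast hdR
  have hNR : (N : ℝ) * ((M : ℝ) - 1) = (d : ℝ) ^ 2 - 1 := by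
    have h1 : 1 ≤ M := by omega
    have h2 : 1 ≤ d ^ 2 := Nat.one_le_pow 2 d hd0
    have h3 := congrArg (Nat.cast : ℕ → ℝ) hNM
    push_cast [h1, h2] at h3
    linarith [h3]
  have hherm : ∀ β k, (E β k)ᴴ = E β k := fun β k => (hpsd β k).isHermitian
  -- each α gives a POVM: ∑ k, E α k = 1
  have hsum : ∀ α, ∑ k, E α k = 1 := by
    intro α
    set S : Matrix (Fin d) (Fin d) ℂ := ∑ k, E α k with hS
    have hSH : Sᴴ = S := by
      rw [hS, Matrix.conjTranspose_sum]
      exact Finset.sum_congr rfl fun k _ => hherm α k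
    have htrS : S.trace = (d : ℂ) := by
      rw [hS, Matrix.trace_sum]
      simp only [htr]
      rw [Finset.sum_const, Finset.card_univ, Fintype.card_fin]
      rw [nsmul_eq_mul]
      push_cast
      field_simp
    have htrSS : (S * S).trace = (d : ℂ) := by
      rw [hS, Finset.sum_mul_sum, Matrix.trace_sum]
      have hrow : ∀ k : Fin M, (∑ l, (E α k * E α l)).trace = (((d:ℝ)/M : ℝ) : ℂ) := by
        intro k
        rw [Matrix.trace_sum]
        rw [← Finset.add_sum_erase _ _ (Finset.mem_univ k)]
        rw [htr2]
        have : ∀ l ∈ Finset.univ.erase k, (E α k * E α l).trace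
            = ((((d : ℝ) - M * x) / (M * (M - 1)) : ℝ) : ℂ) := by
          intro l hl
          exact htrkl α k l (Ne.symm (Finset.ne_of_mem_erase hl))
        rw [Finset.sum_congr rfl this, Finset.sum_const,
          Finset.card_erase_of_mem (Finset.mem_univ k), Finset.card_univ, Fintype.card_fin]
        have hreal : x + ((M - 1 : ℕ) : ℝ) * (((d : ℝ) - M * x) / (M * (M - 1))) = (d:ℝ)/M := by
          have hcast : ((M - 1 : ℕ) : ℝ) = (M : ℝ) - 1 := by
            have : 1 ≤ M := by omega
            push_cast [this]; ring
          rw [hcast]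
          field_simp
          ring
        calc (x : ℂ) + (M-1 : ℕ) • ((((d : ℝ) - M * x) / (M * (M - 1)) : ℝ) : ℂ)
            = ((x + ((M - 1 : ℕ) : ℝ) * (((d : ℝ) - M * x) / (M * (M - 1))) : ℝ) : ℂ) := by
              push_cast; ring
          _ = (((d:ℝ)/M : ℝ) : ℂ) := by rw [hreal]
      calc ∑ k, (∑ l, (E α k * E α l)).trace = ∑ k : Fin M, (((d:ℝ)/M : ℝ) : ℂ) :=
            Finset.sum_congr rfl fun k _ => hrow k
        _ = (d : ℂ) := by
            rw [Finset.sum_const, Finset.card_univ, Fintype.card_fin]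
            rw [nsmul_eq_mul]
            push_cast
            field_simp
    have hzero : ((S - 1)ᴴ * (S - 1)).trace = 0 := by
      have hexp : (S - 1)ᴴ * (S - 1) = S * S - S - S + 1 := by
        rw [Matrix.conjTranspose_sub, hSH, Matrix.conjTranspose_one]
        noncomm_ring
      rw [hexp, Matrix.trace_add, Matrix.trace_sub, Matrix.trace_sub, htrSS, htrS,
        Matrix.trace_one]
      simp [Fintype.card_fin]
    have h0 := aux_traceCTmul_zero _ hzero
    rw [sub_eq_zero] at h0
    exact h0
  -- the traceless recentered family
  set m : ℂ := (M : ℂ)⁻¹ with hm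
  set F : Fin N × Fin M → Matrix (Fin d) (Fin d) ℂ :=
    fun i => E i.1 i.2 - m • 1 with hFdef
  set aR : ℝ := x - d / M ^ 2 with haR
  set bR : ℝ := ((d : ℝ) - M * x) / (M * (M - 1)) - d / M ^ 2 with hbR
  set cR : ℝ := aR - bR with hcR
  have hFmul : ∀ (X Y : Matrix (Fin d) (Fin d) ℂ),
      ((X - m • 1) * (Y - m • 1)).trace
        = (X * Y).trace - m * Y.trace - m * X.trace + m * m * (d : ℂ) := by
    intro X Y
    have h1 : (X - m • 1) * (Y - m • 1) = X * Y - m • Y - m • X + (m * m) • 1 := by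
      have e1 : X * (m • 1) = m • X := by rw [Matrix.mul_smul, Matrix.mul_one]
      have e2 : (m • (1 : Matrix (Fin d) (Fin d) ℂ)) * Y = m • Y := by
        rw [Matrix.smul_mul, Matrix.one_mul]
      have e3 : (m • (1 : Matrix (Fin d) (Fin d) ℂ)) * (m • 1) = (m * m) • 1 := by
        rw [Matrix.smul_mul, Matrix.mul_smul, Matrix.mul_one, smul_smul]
      rw [Matrix.sub_mul, Matrix.mul_sub, Matrix.mul_sub, e1, e2, e3]
      abel
    rw [h1, Matrix.trace_add, Matrix.trace_sub, Matrix.trace_sub, Matrix.trace_smul,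
      Matrix.trace_smul, Matrix.trace_smul, Matrix.trace_one]
    simp only [Fintype.card_fin, smul_eq_mul]
  have hgram0 : ∀ (α β : Fin N) (k l : Fin M), α ≠ β →
      (F (α, k) * F (β, l)).trace = 0 := by
    intro α β k l hab
    show ((E α k - m • 1) * (E β l - m • 1)).trace = 0
    rw [hFmul, htrab α β k l hab, htr, htr, hm]
    push_cast
    field_simp
    ring
  have hgramA : ∀ (α : Fin N) (k : Fin M), (F (α, k) * F (α, k)).trace = ((aR : ℝ) : ℂ) := by
    intro α k
    show ((E α k - m • 1) * (E α k - m • 1)).trace = _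
    rw [hFmul, htr2, htr, hm, haR]
    push_cast
    field_simp
    ring
  have hgramB : ∀ (α : Fin N) (k l : Fin M), k ≠ l →
      (F (α, k) * F (α, l)).trace = ((bR : ℝ) : ℂ) := by
    intro α k l hkl
    show ((E α k - m • 1) * (E α l - m • 1)).trace = _
    rw [hFmul, htrkl α k l hkl, htr, htr, hm, hbR]
    push_cast
    field_simp
    ring
  have hFtr : ∀ i, (F i).trace = 0 := by
    intro i
    show (E i.1 i.2 - m • 1).trace = 0
    rw [Matrix.trace_sub, Matrix.trace_smul, Matrix.trace_one, htr, hm]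
    simp [Fintype.card_fin, smul_eq_mul]
    field_simp
    ring
  have hFsum : ∀ α, ∑ k, F (α, k) = 0 := by
    intro α
    show ∑ k, (E α k - m • 1) = 0
    rw [Finset.sum_sub_distrib, hsum α, Finset.sum_const, Finset.card_univ, Fintype.card_fin]
    rw [hm, sub_eq_zero]
    rw [← Nat.cast_smul_eq_nsmul (R := ℂ), smul_smul, mul_inv_cancel₀ hM0C, one_smul]
  have haRpos : 0 < aR := by
    rw [haR]
    linarith [hx1]
  have hMaR : (M : ℝ) * aR = ((M : ℝ) - 1) * cR := by
    rw [hcR, haR, hbR]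
    field_simp
    ring
  have hcRpos : 0 < cR := by
    have h1 : 0 < (M : ℝ) - 1 := by linarith
    have hMpos : (0 : ℝ) < M := by linarith
    have h2 : 0 < (M : ℝ) * aR := mul_pos hMpos haRpos
    nlinarith
  have hcC : ((cR : ℝ) : ℂ) ≠ 0 := Complex.ofReal_ne_zero.mpr hcRpos.ne'
  have heig : ∀ j : Fin N × Fin M,
      ∑ i, (F i * F j).trace • F i = ((cR : ℝ) : ℂ) • F j := by
    rintro ⟨β, l⟩
    rw [Fintype.sum_prod_type]
    rw [Finset.sum_eq_single_of_mem β (Finset.mem_univ β) ?h0]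
    case h0 =>
      intro α _ hab
      exact Finset.sum_eq_zero fun k _ => by rw [hgram0 α β k l hab, zero_smul]
    have hsplit : ∀ k : Fin M, (F (β, k) * F (β, l)).trace • F (β, k)
        = ((bR : ℝ) : ℂ) • F (β, k)
          + (if k = l then (((aR : ℝ) : ℂ) - ((bR : ℝ) : ℂ)) • F (β, k) else 0) := by
      intro k
      by_cases h : k = l
      · subst h
        rw [hgramA, if_pos rfl, sub_smul]
        abel
      · rw [hgramB β k l h, if_neg h, add_zero]
    rw [Finset.sum_congr rfl fun k _ => hsplit k, Finset.sum_add_distrib,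
      ← Finset.smul_sum, hFsum β, smul_zero, zero_add, Finset.sum_ite_eq' Finset.univ l]
    rw [if_pos (Finset.mem_univ l), hcR]
    push_cast
    ring_nf
  have hcard : ∑ i : Fin N × Fin M, (F i * F i).trace
      = ((d ^ 2 - 1 : ℕ) : ℂ) * ((cR : ℝ) : ℂ) := by
    have hLHS : ∑ i : Fin N × Fin M, (F i * F i).trace = ((N * M : ℝ) * aR : ℝ) := by
      rw [Fintype.sum_prod_type]
      rw [Finset.sum_congr rfl fun α _ => Finset.sum_congr rfl fun k _ => hgramA α k]
      rw [Finset.sum_const, Finset.sum_const, Finset.card_univ, Finset.card_univ,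
        Fintype.card_fin, Fintype.card_fin]
      push_cast
      rw [smul_smul]
      simp [smul_eq_mul]
    rw [hLHS]
    have hcast : ((d ^ 2 - 1 : ℕ) : ℂ) = ((d : ℂ) ^ 2 - 1) := by
      have : 1 ≤ d ^ 2 := Nat.one_le_pow 2 d hd0
      push_cast [this]
      ring
    rw [hcast]
    have hreal : (N * M : ℝ) * aR = ((d : ℝ) ^ 2 - 1) * cR := by
      have : (N : ℝ) * ((M : ℝ) * aR) = (N : ℝ) * (((M : ℝ) - 1) * cR) := by rw [hMaR]
      calc (N * M : ℝ) * aR = (N : ℝ) * ((M : ℝ) * aR) := by push_cast; ring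
        _ = (N : ℝ) * (((M : ℝ) - 1) * cR) := this
        _ = ((N : ℝ) * ((M : ℝ) - 1)) * cR := by ring
        _ = ((d : ℝ) ^ 2 - 1) * cR := by rw [hNR]
    rw [hreal]
    push_cast
    ring
  have key := frame_lemma hd0 F ((cR : ℝ) : ℂ) hcC hFtr heig hcard
  -- scalar identity
  have keyscalar : ∀ A B : Matrix (Fin d) (Fin d) ℂ,
      ∑ i : Fin N × Fin M, (F i * A).trace * (F i * B).trace
        = ((cR : ℝ) : ℂ) * (A * B).trace
          - ((cR : ℝ) : ℂ) * (A.trace * B.trace) / (d : ℂ) := by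
    intro A B
    have h1 : ((∑ i : Fin N × Fin M, (F i * A).trace • F i) * B).trace
        = ∑ i : Fin N × Fin M, (F i * A).trace * (F i * B).trace := by
      rw [Finset.sum_mul, Matrix.trace_sum]
      exact Finset.sum_congr rfl fun i _ => by
        rw [Matrix.smul_mul, Matrix.trace_smul, smul_eq_mul]
    rw [key A] at h1
    rw [← h1, Matrix.sub_mul, Matrix.smul_mul, Matrix.smul_mul, Matrix.one_mul,
      Matrix.trace_sub, Matrix.trace_smul, Matrix.trace_smul, smul_eq_mul, smul_eq_mul]
    ring
  -- total sum of F vanishes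
  have hFtot : ∑ i : Fin N × Fin M, F i = 0 := by
    rw [Fintype.sum_prod_type]
    exact Finset.sum_eq_zero fun α _ => hFsum α
  have hFsumtr : ∀ X : Matrix (Fin d) (Fin d) ℂ,
      ∑ i : Fin N × Fin M, (F i * X).trace = 0 := by
    intro X
    rw [← Matrix.trace_sum, ← Finset.sum_mul, hFtot, Matrix.zero_mul, Matrix.trace_zero]
  -- decomposition of traces
  have hEdecomp : ∀ (i : Fin N × Fin M) (X : Matrix (Fin d) (Fin d) ℂ),
      (E i.1 i.2 * X).trace = (F i * X).trace + m * X.trace := by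
    intro i X
    have : E i.1 i.2 = F i + m • 1 := by rw [hFdef]; simp
    rw [this, Matrix.add_mul, Matrix.trace_add, Matrix.smul_mul, Matrix.one_mul,
      Matrix.trace_smul, smul_eq_mul]
  -- conjugate of the trace
  have hconj : ∀ (α : Fin N) (k : Fin M),
      (starRingEnd ℂ) ((E α k * σ).trace) = (E α k * σᴴ).trace := by
    intro α k
    have h1 : (starRingEnd ℂ) ((E α k * σ).trace) = ((E α k * σ)ᴴ).trace := by
      rw [Matrix.trace_conjTranspose]
      rfl
    rw [h1, Matrix.conjTranspose_mul, hherm, Matrix.trace_mul_comm]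
  -- the complex sum
  set t : ℂ := σ.trace with ht
  have htconj : σᴴ.trace = (starRingEnd ℂ) t := by
    rw [Matrix.trace_conjTranspose]
    rfl
  set Z : ℂ := ∑ i : Fin N × Fin M, (E i.1 i.2 * σ).trace * (E i.1 i.2 * σᴴ).trace with hZ
  have hZval : Z = ((cR : ℝ) : ℂ) * (σ * σᴴ).trace
      - ((cR : ℝ) : ℂ) * (t * σᴴ.trace) / (d : ℂ)
      + ((N : ℂ) * M) * (m * m) * (t * σᴴ.trace) := by
    rw [hZ]
    have hexp : ∀ i : Fin N × Fin M,
        (E i.1 i.2 * σ).trace * (E i.1 i.2 * σᴴ).trace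
          = (F i * σ).trace * (F i * σᴴ).trace
            + (m * σᴴ.trace) * (F i * σ).trace
            + (m * t) * (F i * σᴴ).trace
            + (m * t) * (m * σᴴ.trace) := by
      intro i
      rw [hEdecomp i σ, hEdecomp i σᴴ, ← ht]
      ring
    rw [Finset.sum_congr rfl fun i _ => hexp i]
    rw [Finset.sum_add_distrib, Finset.sum_add_distrib, Finset.sum_add_distrib]
    rw [← Finset.mul_sum, ← Finset.mul_sum, hFsumtr σ, hFsumtr σᴴ, mul_zero, mul_zero,
      Finset.sum_const, Finset.card_univ, Fintype.card_prod, Fintype.card_fin, Fintype.card_fin]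
    rw [keyscalar σ σᴴ]
    push_cast
    rw [nsmul_eq_mul]
    push_cast
    ring
  -- reduce LHS to Z.re
  have hLHSZ : ∑ α, ∑ k, ‖(E α k * σ).trace‖ ^ 2 = Z.re := by
    rw [hZ, Fintype.sum_prod_type, Complex.re_sum]
    refine Finset.sum_congr rfl fun α _ => ?_
    rw [Complex.re_sum]
    refine Finset.sum_congr rfl fun k _ => ?_
    show ‖(E α k * σ).trace‖ ^ 2
      = ((E α k * σ).trace * (E α k * σᴴ).trace).re
    rw [← hconj α k, Complex.mul_conj, Complex.ofReal_re, Complex.sq_norm]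
  rw [hLHSZ]
  -- compute Z.re
  set rR : ℝ := (N : ℝ) / M - cR / d with hrR
  have habs : t * σᴴ.trace = ((‖t‖ ^ 2 : ℝ) : ℂ) := by
    rw [htconj, Complex.mul_conj, Complex.sq_norm]
  have hco : ((N : ℂ) * M) * (m * m) - ((cR : ℝ) : ℂ) / d = ((rR : ℝ) : ℂ) := by
    rw [hrR, hm]
    push_cast
    field_simp
  have hZ2 : Z = ((cR : ℝ) : ℂ) * (σ * σᴴ).trace + ((rR : ℝ) : ℂ) * ((‖t‖ ^ 2 : ℝ) : ℂ) := by
    rw [hZval, habs, ← hco]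
    ring
  have hZre : Z.re = cR * (σ * σᴴ).trace.re + rR * ‖t‖ ^ 2 := by
    rw [hZ2, ← Complex.ofReal_mul, Complex.add_re, Complex.re_ofReal_mul, Complex.ofReal_re]
  rw [hZre]
  -- final real arithmetic
  have hden : (d : ℝ) * M * ((M : ℝ) - 1) ≠ 0 := by
    intro h
    rcases mul_eq_zero.mp h with h1 | h2
    · rcases mul_eq_zero.mp h1 with h3 | h4
      · exact hdR h3
      · exact hM0R h4
    · exact hM1R h2
  rw [eq_div_iff hden]
  have hc2 : cR * ((d : ℝ) * M * ((M : ℝ) - 1)) = (d : ℝ) * ((M : ℝ) ^ 2 * x - d) := by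
    rw [hcR, haR, hbR]
    field_simp
    ring
  have hcd : cR * ((M : ℝ) * ((M : ℝ) - 1)) = (M : ℝ) ^ 2 * x - d := by
    apply mul_left_cancel₀ hdR
    linear_combination hc2
  have hr2 : rR * ((d : ℝ) * M * ((M : ℝ) - 1)) = (d : ℝ) ^ 3 - (M : ℝ) ^ 2 * x := by
    rw [hrR]
    have expand : ((N : ℝ) / M - cR / d) * ((d : ℝ) * M * ((M : ℝ) - 1))
        = (N : ℝ) * ((M : ℝ) - 1) * d - cR * ((M : ℝ) * ((M : ℝ) - 1)) := by
      field_simp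
    rw [expand, hNR, hcd]
    ring
  linear_combination (σ * σᴴ).trace.re * hc2 + ‖t‖ ^ 2 * hr2
end

section
/- Under the hypotheses of the informationally complete (N,M)-POVM {E_{α,k}} on ℂ^d, any linear operator σ on ℂ^d satisfies the reconstruction formula σ = Σ_{α,k} tr(E_{α,k}σ)·F_{α,k}, where F_{α,k} = (x−y)^{-1}·(E_{α,k} − ((N−1)z+y)/(Nw)·I_d) with w = d/M, y = (d−Mx)/(M(M−1)), z = d/M². -/
open Matrix
open scoped ComplexOrder

set_option maxHeartbeats 2000000

lemma frob_zero {m : Type*} [Fintype m] [DecidableEq m] {A : Matrix m m ℂ}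
    (h : (Aᴴ * A).trace = 0) : A = 0 := by
  have h1 : ((∑ i, ∑ j, Complex.normSq (A j i) : ℝ) : ℂ) = 0 := by
    rw [← h]
    simp only [Matrix.trace, Matrix.diag, Matrix.mul_apply, Matrix.conjTranspose_apply]
    push_cast
    refine (Finset.sum_congr rfl fun i _ => Finset.sum_congr rfl fun j _ => ?_).symm
    rw [Complex.normSq_eq_conj_mul_self]
    rfl
  have h2 : ∑ i, ∑ j, Complex.normSq (A j i) = 0 := by exact_mod_cast h1
  ext i j
  have h3 := (Finset.sum_eq_zero_iff_of_nonneg (fun i _ => Finset.sum_nonneg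
    (fun j _ => Complex.normSq_nonneg _))).mp h2 j (Finset.mem_univ _)
  have h4 := (Finset.sum_eq_zero_iff_of_nonneg (fun k _ => Complex.normSq_nonneg _)).mp h3 i
    (Finset.mem_univ _)
  simpa using Complex.normSq_eq_zero.mp h4

lemma sum_pull {γ : Type*} [Fintype γ] (p : Prop) [Decidable p] (f : γ → ℂ) :
    (∑ u, if p then f u else 0) = if p then ∑ u, f u else 0 := by
  split <;> simp

lemma sum_split {ι₁ ι₂ : Type*} [Fintype ι₁] [Fintype ι₂] [DecidableEq ι₁] [DecidableEq ι₂]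
    (t : ι₁ → ι₂ → ℂ) (β : ι₁) (l : ι₂) (cz cy cx : ℂ) :
    ∑ α, ∑ k, t α k * (cz + (if α = β then cy else 0) + (if α = β ∧ k = l then cx else 0))
      = (∑ α, ∑ k, t α k) * cz + (∑ k, t β k) * cy + t β l * cx := by
  simp only [mul_add, Finset.sum_add_distrib, ← Finset.sum_mul, ite_and, mul_ite, mul_zero,
    sum_pull, Finset.sum_ite_eq', Finset.mem_univ, if_true]

/-- Reconstruction formula: σ = ∑ tr(E_{α,k} σ) F_{α,k} with the dual operators F. -/
theorem povm_reconstruction (d N M : ℕ) (hd : 2 ≤ d) (hM : 2 ≤ M)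
    (hNM : N * (M - 1) = d ^ 2 - 1)
    (x : ℝ) (hx1 : (d : ℝ) / M ^ 2 < x)
    (hx2 : x ≤ min ((d : ℝ) ^ 2 / M ^ 2) ((d : ℝ) / M))
    (E : Fin N → Fin M → Matrix (Fin d) (Fin d) ℂ)
    (hpsd : ∀ α k, (E α k).PosSemidef)
    (htr : ∀ α k, (E α k).trace = (((d : ℝ) / M : ℝ) : ℂ))
    (htr2 : ∀ α k, (E α k * E α k).trace = (x : ℂ))
    (htrkl : ∀ α k l, k ≠ l →
      (E α k * E α l).trace = ((((d : ℝ) - M * x) / (M * (M - 1)) : ℝ) : ℂ))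
    (htrab : ∀ α β k l, α ≠ β →
      (E α k * E β l).trace = (((d : ℝ) / M ^ 2 : ℝ) : ℂ))
    (w y z : ℝ) (hw : w = (d : ℝ) / M) (hy : y = ((d : ℝ) - M * x) / (M * (M - 1)))
    (hz : z = (d : ℝ) / M ^ 2)
    (F : Fin N → Fin M → Matrix (Fin d) (Fin d) ℂ)
    (hF : ∀ α k, F α k = (((x - y)⁻¹ : ℝ) : ℂ) •
      (E α k - (((((N : ℝ) - 1) * z + y) / (N * w) : ℝ) : ℂ) • (1 : Matrix (Fin d) (Fin d) ℂ)))
    (σ : Matrix (Fin d) (Fin d) ℂ) :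
    σ = ∑ α, ∑ k, (E α k * σ).trace • F α k := by
  classical
  -- numeric preliminaries
  have hd4 : 4 ≤ d ^ 2 := by nlinarith
  have hN0 : N ≠ 0 := by rintro rfl; simp at hNM; omega
  have hNpos : 0 < N := Nat.pos_of_ne_zero hN0
  have hdR : (0:ℝ) < d := by exact_mod_cast Nat.lt_of_lt_of_le (by norm_num) hd
  have hMR : (0:ℝ) < M := by exact_mod_cast Nat.lt_of_lt_of_le (by norm_num) hM
  have hM1R : (0:ℝ) < (M:ℝ) - 1 := by
    have : (2:ℝ) ≤ M := by exact_mod_cast hM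
    linarith
  have hNR : (0:ℝ) < N := by exact_mod_cast hNpos
  have hwpos : 0 < w := by rw [hw]; positivity
  have hzpos : 0 < z := by rw [hz]; positivity
  have hMx : (d:ℝ) < M^2 * x := by
    have := hx1
    rw [div_lt_iff₀ (by positivity)] at this
    linarith
  have hxy : 0 < x - y := by
    rw [hy]
    rw [sub_pos, div_lt_iff₀ (by positivity)]
    nlinarith
  have hzy : 0 < z - y := by
    rw [hy, hz, sub_pos, div_lt_div_iff₀ (by positivity) (by positivity)]
    nlinarith
  have hxy0 : x - y ≠ 0 := ne_of_gt hxy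
  have hherm : ∀ α k, (E α k)ᴴ = E α k := fun α k => (hpsd α k).1
  -- key real identities
  have hMy : (M:ℝ) * ((M:ℝ) - 1) * y = d - M * x := by
    rw [hy]; field_simp
  have hMwz : w = M * z := by rw [hw, hz]; field_simp
  have hdMw : (d:ℝ) = M * w := by rw [hw]; field_simp
  have hxyz : x + ((M:ℝ) - 1) * y - M * z = 0 := by
    have : (M:ℝ) * (x + ((M:ℝ) - 1) * y - M * z) = 0 := by
      rw [hz]; field_simp
      nlinarith [hMy]
    have hM0 : (M:ℝ) ≠ 0 := ne_of_gt hMR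
    exact by
      rcases mul_eq_zero.mp this with h | h
      · exact absurd h hM0
      · exact h
  -- each ∑_k E α k equals 1
  have hsum1 : ∀ α, (∑ k, E α k) = 1 := by
    intro α
    set P : Matrix (Fin d) (Fin d) ℂ := ∑ k, E α k with hP
    have hPH : Pᴴ = P := by
      rw [hP, conjTranspose_sum]
      exact Finset.sum_congr rfl fun k _ => hherm α k
    have htrP : P.trace = ((d:ℝ) : ℂ) := by
      rw [hP, trace_sum]
      simp only [htr]
      rw [Finset.sum_const, Finset.card_univ, Fintype.card_fin, nsmul_eq_mul]
      push_cast
      field_simp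
    have htrPP : (P * P).trace = ((d:ℝ) : ℂ) := by
      have hexp : P * P = ∑ k, ∑ l, E α k * E α l := by
        rw [hP, Finset.sum_mul]
        exact Finset.sum_congr rfl fun k _ => Finset.mul_sum _ _ _
      rw [hexp, trace_sum]
      have hrow : ∀ k : Fin M, (∑ l, E α k * E α l).trace = ((x + ((M:ℝ)-1) * y : ℝ) : ℂ) := by
        intro k
        rw [trace_sum, ← Finset.add_sum_erase _ _ (Finset.mem_univ k)]
        rw [htr2, Finset.sum_congr rfl (fun l hl => htrkl α k l
          (fun hkl => (Finset.mem_erase.mp hl).1 hkl.symm)), Finset.sum_const,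
          Finset.card_erase_of_mem (Finset.mem_univ k), Finset.card_univ, Fintype.card_fin,
          nsmul_eq_mul, ← hy]
        push_cast [Nat.cast_sub (le_of_lt (lt_of_lt_of_le one_lt_two hM))]
        ring
      rw [Finset.sum_congr rfl fun k _ => hrow k, Finset.sum_const, Finset.card_univ,
        Fintype.card_fin, nsmul_eq_mul]
      have : (M:ℝ) * (x + ((M:ℝ)-1) * y) = d := by nlinarith [hMy]
      push_cast
      exact_mod_cast this
    have hz0 : ((P - 1)ᴴ * (P - 1)).trace = 0 := by
      rw [conjTranspose_sub, hPH, conjTranspose_one]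
      simp only [sub_mul, mul_sub, mul_one, one_mul, trace_sub, htrPP, htrP, trace_one,
        Fintype.card_fin]
      push_cast
      ring
    have := frob_zero hz0
    have : P = 1 := by
      have h := sub_eq_zero.mp this
      exact h
    exact this
  -- decomposed pairwise traces of the E's
  have hEE : ∀ (β : Fin N) (l : Fin M) (α : Fin N) (k : Fin M),
      (E β l * E α k).trace = ((z:ℝ) : ℂ) + (if α = β then ((y - z : ℝ) : ℂ) else 0)
        + (if α = β ∧ k = l then ((x - y : ℝ) : ℂ) else 0) := by
    intro β l α k
    by_cases hab : α = β
    · subst hab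
      by_cases hkl : k = l
      · subst hkl
        rw [if_pos rfl, if_pos ⟨rfl, rfl⟩, htr2]
        push_cast; ring
      · rw [if_pos rfl, if_neg (fun h : α = α ∧ k = l => hkl h.2),
          htrkl α l k (fun h => hkl h.symm), ← hy]
        push_cast; ring
    · rw [if_neg hab, if_neg (fun h : α = β ∧ k = l => hab h.1),
        htrab β α l k (fun h => hab h.symm), ← hz]
      push_cast; ring
  -- the dual coefficients
  set c₀ : ℝ := (((N:ℝ) - 1) * z + y) / ((N:ℝ) * w) with hc₀
  set ee : ℝ := (x - y)⁻¹ * (z - c₀ * w) with hee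
  set bb : ℝ := (x - y)⁻¹ * (y - z) with hbb
  have hNw : (N:ℝ) * w ≠ 0 := by positivity
  have hc₀w : (N:ℝ) * (c₀ * w) = ((N:ℝ) - 1) * z + y := by
    rw [hc₀]; field_simp
  have hNe : (N:ℝ) * ee + bb = 0 := by
    rw [hee, hbb, ← mul_assoc, mul_comm ((N:ℝ)) ((x-y)⁻¹), mul_assoc, ← mul_add]
    rw [show (N:ℝ) * (z - c₀ * w) + (y - z) = ((N:ℝ)*z - ((N:ℝ) * (c₀ * w))) + (y - z) by ring,
      hc₀w]
    ring_nf
  have hr2 : (x - y)⁻¹ * (y - c₀ * w) = ee + bb := by rw [hee, hbb]; ring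
  have hr1 : (x - y)⁻¹ * (x - c₀ * w) = ee + bb + 1 := by
    have hinv : (x - y)⁻¹ * (x - y) = 1 := inv_mul_cancel₀ hxy0
    rw [show x - c₀ * w = (y - c₀ * w) + (x - y) by ring, mul_add, hr2, hinv]
  -- decomposed traces tr(E βl * F αk)
  have hEF : ∀ (β : Fin N) (l : Fin M) (α : Fin N) (k : Fin M),
      (E β l * F α k).trace = ((ee:ℝ) : ℂ) + (if α = β then ((bb:ℝ) : ℂ) else 0)
        + (if α = β ∧ k = l then 1 else 0) := by
    intro β l α k
    rw [hF α k, mul_smul_comm, trace_smul, mul_sub, Matrix.mul_smul, mul_one, trace_sub,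
      trace_smul, hEE, htr, ← hw, smul_eq_mul, smul_eq_mul]
    by_cases hab : α = β
    · by_cases hkl : k = l
      · simp only [if_pos hab, if_pos (⟨hab, hkl⟩ : α = β ∧ k = l)]
        norm_cast
        linear_combination hr1
      · simp only [if_pos hab, if_neg (fun h : α = β ∧ k = l => hkl h.2)]
        norm_cast
        linear_combination hr2
    · simp only [if_neg hab, if_neg (fun h : α = β ∧ k = l => hab h.1)]
      norm_cast
      linear_combination hee
  -- the row sums of tr(E σ)
  have hPσ : ∀ β : Fin N, (∑ k, (E β k * σ).trace) = σ.trace := by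
    intro β
    rw [← trace_sum, ← Finset.sum_mul, hsum1, one_mul]
  -- main vanishing identity
  have hmain : ∀ (β : Fin N) (l : Fin M),
      (E β l * (σ - ∑ α, ∑ k, (E α k * σ).trace • F α k)).trace = 0 := by
    intro β l
    rw [mul_sub, trace_sub]
    have hexp : (E β l * ∑ α, ∑ k, (E α k * σ).trace • F α k).trace
        = ∑ α, ∑ k, (E α k * σ).trace * (E β l * F α k).trace := by
      rw [Matrix.mul_sum, trace_sum]
      refine Finset.sum_congr rfl fun α _ => ?_
      rw [Matrix.mul_sum, trace_sum]
      refine Finset.sum_congr rfl fun k _ => ?_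
      rw [Matrix.mul_smul, trace_smul, smul_eq_mul]
    rw [hexp]
    rw [Finset.sum_congr rfl fun α _ => Finset.sum_congr rfl fun k _ => by rw [hEF β l α k]]
    rw [sum_split (fun α k => (E α k * σ).trace) β l]
    rw [Finset.sum_congr rfl fun α (_ : α ∈ Finset.univ) => hPσ α, hPσ β,
      Finset.sum_const, Finset.card_univ, Fintype.card_fin, nsmul_eq_mul, mul_one]
    have : ((N:ℕ):ℂ) * σ.trace * ((ee:ℝ):ℂ) + σ.trace * ((bb:ℝ):ℂ)
        = σ.trace * ((((N:ℝ) * ee + bb : ℝ)):ℂ) := by push_cast; ring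
    rw [show (E β l * σ).trace - (((N:ℕ):ℂ) * σ.trace * ((ee:ℝ):ℂ) + σ.trace * ((bb:ℝ):ℂ)
        + (E β l * σ).trace) = -(((N:ℕ):ℂ) * σ.trace * ((ee:ℝ):ℂ) + σ.trace * ((bb:ℝ):ℂ)) by ring,
      this, hNe]
    simp
  -- spanning: d^2 linearly independent elements in the span of the E's
  have hM1 : 1 ≤ M := le_trans (by norm_num) hM
  let emb : Fin (M-1) → Fin M := fun k => ⟨k.1 + 1, by have := k.2; omega⟩
  have embinj : ∀ {a b : Fin (M-1)}, emb a = emb b → a = b := by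
    intro a b h
    have := congrArg Fin.val h
    simp only [emb] at this
    exact Fin.ext (by omega)
  set v : (Fin N × Fin (M-1)) ⊕ Unit → Matrix (Fin d) (Fin d) ℂ :=
    Sum.elim (fun p => E p.1 (emb p.2)) (fun _ => 1) with hv
  have hvv : ∀ (β : Fin N) (l : Fin (M-1)) (α : Fin N) (k : Fin (M-1)),
      (E β (emb l) * E α (emb k)).trace = ((z:ℝ) : ℂ)
        + (if α = β then ((y - z : ℝ) : ℂ) else 0)
        + (if α = β ∧ k = l then ((x - y : ℝ) : ℂ) else 0) := by
    intro β l α k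
    rw [hEE β (emb l) α (emb k)]
    have hcond : (α = β ∧ emb k = emb l) = (α = β ∧ k = l) := by
      apply propext
      constructor
      · rintro ⟨h1, h2⟩; exact ⟨h1, embinj h2⟩
      · rintro ⟨h1, h2⟩; exact ⟨h1, by rw [h2]⟩
    simp only [hcond]
  have hli : LinearIndependent ℂ v := by
    rw [Fintype.linearIndependent_iff]
    intro g hg
    have key : ∀ B : Matrix (Fin d) (Fin d) ℂ, ∑ i, g i * (B * v i).trace = 0 := by
      intro B
      have h0 : (B * ∑ i, g i • v i).trace = 0 := by rw [hg, mul_zero, trace_zero]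
      rw [Matrix.mul_sum, trace_sum] at h0
      simpa only [Matrix.mul_smul, trace_smul, smul_eq_mul] using h0
    have hsum_inl : ∀ (β : Fin N) (l : Fin (M-1)),
        (∑ p : Fin N × Fin (M-1), g (Sum.inl p) * (E β (emb l) * E p.1 (emb p.2)).trace)
          = (∑ α, ∑ k, g (Sum.inl (α, k))) * ((z:ℝ):ℂ)
            + (∑ k, g (Sum.inl (β, k))) * ((y - z : ℝ):ℂ)
            + g (Sum.inl (β, l)) * ((x - y : ℝ):ℂ) := by
      intro β l
      rw [Fintype.sum_prod_type]
      rw [Finset.sum_congr rfl fun α (_ : α ∈ Finset.univ) =>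
        Finset.sum_congr rfl fun k (_ : k ∈ Finset.univ) => by rw [hvv β l α k]]
      exact sum_split (fun α k => g (Sum.inl (α, k))) β l _ _ _
    have eq1 : ∀ (β : Fin N) (l : Fin (M-1)),
        (∑ α, ∑ k, g (Sum.inl (α, k))) * ((z:ℝ):ℂ)
          + (∑ k, g (Sum.inl (β, k))) * ((y - z : ℝ):ℂ)
          + g (Sum.inl (β, l)) * ((x - y : ℝ):ℂ)
          + g (Sum.inr ()) * ((w:ℝ):ℂ) = 0 := by
      intro β l
      have h := key (E β (emb l))
      rw [Fintype.sum_sum_type] at h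
      simp only [hv, Sum.elim_inl, Sum.elim_inr] at h
      simp only [Fintype.sum_unique] at h
      rw [mul_one, htr β (emb l), ← hw, hsum_inl β l] at h
      linear_combination h
    have eq2 : (∑ α, ∑ k, g (Sum.inl (α, k))) * ((w:ℝ):ℂ)
        + g (Sum.inr ()) * ((d:ℕ):ℂ) = 0 := by
      have h := key 1
      rw [Fintype.sum_sum_type] at h
      simp only [hv, Sum.elim_inl, Sum.elim_inr, one_mul] at h
      simp only [Fintype.sum_unique] at h
      rw [trace_one, Fintype.card_fin] at h
      rw [Fintype.sum_prod_type] at h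
      rw [Finset.sum_congr rfl fun α (_ : α ∈ Finset.univ) =>
        Finset.sum_congr rfl fun k (_ : k ∈ Finset.univ) => by
          rw [htr α (emb k), ← hw]] at h
      rw [show (∑ α : Fin N, ∑ k : Fin (M-1), g (Sum.inl (α, k)) * ((w:ℝ):ℂ))
          = (∑ α, ∑ k, g (Sum.inl (α, k))) * ((w:ℝ):ℂ) by
        rw [Finset.sum_mul]
        exact Finset.sum_congr rfl fun α _ => (Finset.sum_mul _ _ _).symm] at h
      linear_combination h
    have hw0 : ((w:ℝ):ℂ) ≠ 0 := by
      simpa using Complex.ofReal_ne_zero.mpr (ne_of_gt hwpos)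
    have hdc : ((d:ℕ):ℂ) = ((M:ℝ):ℂ) * ((w:ℝ):ℂ) := by
      have := congrArg Complex.ofReal hdMw
      push_cast at this ⊢
      exact this
    have hwz : ((w:ℝ):ℂ) = ((M:ℝ):ℂ) * ((z:ℝ):ℂ) := by
      have := congrArg Complex.ofReal hMwz
      push_cast at this ⊢
      exact this
    have hgS : (∑ α, ∑ k, g (Sum.inl (α, k))) + ((M:ℝ):ℂ) * g (Sum.inr ()) = 0 := by
      have hmul : ((w:ℝ):ℂ) * ((∑ α, ∑ k, g (Sum.inl (α, k))) + ((M:ℝ):ℂ) * g (Sum.inr ())) = 0 := by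
        linear_combination eq2 - g (Sum.inr ()) * hdc
      exact (mul_eq_zero.mp hmul).resolve_left hw0
    have hterm : ∀ (β : Fin N) (l : Fin (M-1)),
        g (Sum.inl (β, l)) * ((x - y : ℝ):ℂ)
          + (∑ k, g (Sum.inl (β, k))) * ((y - z : ℝ):ℂ) = 0 := by
      intro β l
      linear_combination (eq1 β l) - ((z:ℝ):ℂ) * hgS - g (Sum.inr ()) * hwz
    have hxy0C : ((x - y : ℝ):ℂ) ≠ 0 := by
      simpa using Complex.ofReal_ne_zero.mpr hxy0
    have hzy0C : ((z - y : ℝ):ℂ) ≠ 0 := by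
      simpa using Complex.ofReal_ne_zero.mpr (ne_of_gt hzy)
    have hsβ : ∀ β : Fin N, (∑ k, g (Sum.inl (β, k))) = 0 := by
      intro β
      have hsum := Finset.sum_congr rfl fun l (_ : l ∈ (Finset.univ : Finset (Fin (M-1)))) =>
        hterm β l
      rw [Finset.sum_add_distrib, ← Finset.sum_mul, Finset.sum_const, Finset.card_univ,
        Fintype.card_fin, Finset.sum_const_zero, nsmul_eq_mul] at hsum
      have hcast : ((M - 1 : ℕ):ℂ) = ((M:ℝ):ℂ) - 1 := by
        push_cast [Nat.cast_sub hM1]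
        ring
      rw [hcast] at hsum
      have hxyzC : ((x:ℝ):ℂ) + (((M:ℝ):ℂ) - 1) * ((y:ℝ):ℂ) - ((M:ℝ):ℂ) * ((z:ℝ):ℂ) = 0 := by
        have := congrArg Complex.ofReal hxyz
        push_cast at this ⊢
        exact this
      have hmul : (∑ k, g (Sum.inl (β, k))) * ((z - y : ℝ):ℂ) = 0 := by
        push_cast at hsum hxyzC ⊢
        linear_combination hsum - (∑ k, g (Sum.inl (β, k))) * hxyzC
      exact (mul_eq_zero.mp hmul).resolve_right hzy0C
    have hginl : ∀ (β : Fin N) (l : Fin (M-1)), g (Sum.inl (β, l)) = 0 := by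
      intro β l
      have := hterm β l
      rw [hsβ β, zero_mul, add_zero] at this
      exact (mul_eq_zero.mp this).resolve_right hxy0C
    have hg0 : g (Sum.inr ()) = 0 := by
      have hS0 : (∑ α, ∑ k, g (Sum.inl (α, k))) = (0:ℂ) := by
        exact Finset.sum_eq_zero fun α _ => hsβ α
      rw [hS0, zero_add] at hgS
      have hM0C : ((M:ℝ):ℂ) ≠ 0 := by
        simpa using Complex.ofReal_ne_zero.mpr (ne_of_gt hMR)
      exact (mul_eq_zero.mp hgS).resolve_left hM0C
    intro i
    rcases i with ⟨β, l⟩ | u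
    · exact hginl β l
    · cases u; exact hg0
  -- span of the range of v is everything
  have hspanv : Submodule.span ℂ (Set.range v) = ⊤ := by
    apply Submodule.eq_top_of_finrank_eq
    rw [finrank_span_eq_card hli]
    have hfr : Module.finrank ℂ (Matrix (Fin d) (Fin d) ℂ) = d * d := by
      rw [Module.finrank_matrix]
      simp
    rw [hfr]
    simp only [Fintype.card_sum, Fintype.card_prod, Fintype.card_fin, Fintype.card_unit]
    have hd1 : 1 ≤ d ^ 2 := by nlinarith
    have : N * (M - 1) + 1 = d ^ 2 := by omega
    rw [this, pow_two]
  have hspanE : (⊤ : Submodule ℂ (Matrix (Fin d) (Fin d) ℂ))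
      ≤ Submodule.span ℂ (Set.range fun p : Fin N × Fin M => E p.1 p.2) := by
    rw [← hspanv]
    apply Submodule.span_le.mpr
    rintro B ⟨i, rfl⟩
    rcases i with ⟨β, l⟩ | u
    · exact Submodule.subset_span ⟨(β, emb l), rfl⟩
    · show (1 : Matrix (Fin d) (Fin d) ℂ) ∈ _
      rw [← hsum1 ⟨0, hNpos⟩]
      exact Submodule.sum_mem _ fun k _ => Submodule.subset_span ⟨(⟨0, hNpos⟩, k), rfl⟩
  -- conclusion
  set A : Matrix (Fin d) (Fin d) ℂ := σ - ∑ α, ∑ k, (E α k * σ).trace • F α k with hA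
  have hker : ∀ B : Matrix (Fin d) (Fin d) ℂ, (B * A).trace = 0 := by
    let φ : Matrix (Fin d) (Fin d) ℂ →ₗ[ℂ] ℂ :=
      { toFun := fun B => (B * A).trace
        map_add' := fun B C => by
          show ((B + C) * A).trace = (B * A).trace + (C * A).trace
          rw [add_mul, trace_add]
        map_smul' := fun c B => by
          show ((c • B) * A).trace = c * (B * A).trace
          rw [Matrix.smul_mul, trace_smul, smul_eq_mul] }
    have hle : Submodule.span ℂ (Set.range fun p : Fin N × Fin M => E p.1 p.2)
        ≤ LinearMap.ker φ := by
      apply Submodule.span_le.mpr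
      rintro B ⟨⟨α, k⟩, rfl⟩
      exact LinearMap.mem_ker.mpr (hmain α k)
    intro B
    exact LinearMap.mem_ker.mp (hle (hspanE (Submodule.mem_top)))
  have hA0 : A = 0 := frob_zero (hker Aᴴ)
  exact sub_eq_zero.mp hA0
end

section
/- Let {E_{α,k}} be an informationally complete (N,M)-POVM on ℂ^d with parameter x, and let |s⟩, |t⟩ be orthonormal vectors. Then Σ_{α=1}^N Σ_{k=1}^M |⟨s|E_{α,k}|t⟩|² = (M²x − d)/(M(M−1)). -/
set_option maxHeartbeats 1000000

open Matrix
open scoped ComplexOrder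

lemma aux_trace_zero {n : Type*} [Fintype n] [DecidableEq n] (A : Matrix n n ℂ)
    (h : (Aᴴ * A).trace = 0) : A = 0 := by
  have h1 : (Aᴴ * A).trace = ((∑ j, ∑ i, Complex.normSq (A i j) : ℝ) : ℂ) := by
    simp [Matrix.trace, Matrix.mul_apply, Matrix.diag, conjTranspose_apply]
    congr 1; funext j; congr 1; funext i
    rw [mul_comm, Complex.mul_conj]
  rw [h1] at h
  have h2 : (∑ j, ∑ i, Complex.normSq (A i j) : ℝ) = 0 := by exact_mod_cast h
  ext i j
  have h3 := (Finset.sum_eq_zero_iff_of_nonneg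
    (fun j _ => Finset.sum_nonneg fun i _ => Complex.normSq_nonneg _)).mp h2 j (Finset.mem_univ j)
  have h4 := (Finset.sum_eq_zero_iff_of_nonneg
    (fun i _ => Complex.normSq_nonneg _)).mp h3 i (Finset.mem_univ i)
  simpa using Complex.normSq_eq_zero.mp h4

lemma aux_dot_trace {d : ℕ} (A : Matrix (Fin d) (Fin d) ℂ) (s t : Fin d → ℂ) :
    star s ⬝ᵥ (A *ᵥ t) = (A * vecMulVec t (star s)).trace := by
  simp [dotProduct, mulVec, Matrix.trace, Matrix.mul_apply, Matrix.diag, vecMulVec_apply,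
    Finset.mul_sum, Finset.sum_mul]
  congr 1; funext i; congr 1; funext j; ring

/-- Sum of squared off-diagonal POVM matrix elements for orthonormal vectors. -/
theorem povm_offdiag_sum_sq (d N M : ℕ) (hd : 2 ≤ d) (hM : 2 ≤ M)
    (hNM : N * (M - 1) = d ^ 2 - 1)
    (x : ℝ) (hx1 : (d : ℝ) / M ^ 2 < x)
    (hx2 : x ≤ min ((d : ℝ) ^ 2 / M ^ 2) ((d : ℝ) / M))
    (E : Fin N → Fin M → Matrix (Fin d) (Fin d) ℂ)
    (hpsd : ∀ α k, (E α k).PosSemidef)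
    (htr : ∀ α k, (E α k).trace = (((d : ℝ) / M : ℝ) : ℂ))
    (htr2 : ∀ α k, (E α k * E α k).trace = (x : ℂ))
    (htrkl : ∀ α k l, k ≠ l →
      (E α k * E α l).trace = ((((d : ℝ) - M * x) / (M * (M - 1)) : ℝ) : ℂ))
    (htrab : ∀ α β k l, α ≠ β →
      (E α k * E β l).trace = (((d : ℝ) / M ^ 2 : ℝ) : ℂ))
    (s t : Fin d → ℂ) (hs : star s ⬝ᵥ s = 1) (ht : star t ⬝ᵥ t = 1)
    (hst : star s ⬝ᵥ t = 0) :
    ∑ α, ∑ k, ‖star s ⬝ᵥ (E α k *ᵥ t)‖ ^ 2 =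
      ((M : ℝ) ^ 2 * x - d) / ((M : ℝ) * ((M : ℝ) - 1)) := by
  -- basic numeric facts
  have hdN : 0 < d := by omega
  have hMN : 0 < M := by omega
  have hd2 : 4 ≤ d ^ 2 := by nlinarith
  have hNpos : 0 < N := by
    rcases Nat.eq_zero_or_pos N with h | h
    · exfalso; rw [h] at hNM; simp at hNM; omega
    · exact h
  have hM0 : (M : ℝ) ≠ 0 := by positivity
  have hM1 : (M : ℝ) - 1 ≠ 0 := by
    have : (2:ℝ) ≤ (M:ℝ) := by exact_mod_cast hM
    nlinarith
  have hd0 : (d : ℝ) ≠ 0 := by positivity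
  set L : ℝ := ((M : ℝ) ^ 2 * x - d) / ((M : ℝ) * ((M : ℝ) - 1)) with hLdef
  set c : ℝ := ((d : ℝ) - M * x) / ((M:ℝ) * ((M:ℝ) - 1)) with hcdef
  have hM2 : (2:ℝ) ≤ (M:ℝ) := by exact_mod_cast hM
  have hLpos : 0 < L := by
    apply div_pos
    · have : (d:ℝ) / M^2 < x := hx1
      have hM2pos : (0:ℝ) < (M:ℝ)^2 := by positivity
      nlinarith [(div_lt_iff₀ hM2pos).mp hx1]
    · nlinarith
  have hL0 : (L : ℂ) ≠ 0 := by
    simp only [ne_eq, Complex.ofReal_eq_zero]; exact ne_of_gt hLpos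
  have hxcL : x - c = L := by
    rw [hcdef, hLdef]; field_simp; ring
  have hherm : ∀ α k, (E α k)ᴴ = E α k := fun α k => (hpsd α k).1
  -- trace of products within a block
  have hEE : ∀ (α : Fin N) (l k : Fin M),
      (E α l * E α k).trace = (c : ℂ) + (if k = l then ((L : ℝ) : ℂ) else 0) := by
    intro α l k
    by_cases h : k = l
    · subst h
      rw [htr2, if_pos rfl, ← hxcL]; push_cast; ring
    · rw [htrkl α l k (fun hh => h hh.symm), if_neg h, add_zero, hcdef]
  -- block sums of E are the identity
  have sumE : ∀ α, ∑ k, E α k = 1 := by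
    intro α
    have hFh : (∑ k, E α k)ᴴ = ∑ k, E α k := by
      rw [conjTranspose_sum]; exact Finset.sum_congr rfl fun k _ => hherm α k
    have hFtr : (∑ k, E α k).trace = (d : ℂ) := by
      rw [trace_sum]
      simp only [htr]
      rw [Finset.sum_const, Finset.card_univ, Fintype.card_fin, nsmul_eq_mul]
      push_cast
      field_simp
    have hFF : ((∑ k, E α k) * (∑ k, E α k)).trace = (d : ℂ) := by
      rw [Finset.sum_mul, trace_sum]
      have : ∀ l : Fin M, ((E α l) * (∑ k, E α k)).trace
          = (M : ℂ) * (c:ℂ) + (L : ℂ) := by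
        intro l
        rw [Matrix.mul_sum, trace_sum]
        simp only [hEE α l]
        rw [Finset.sum_add_distrib, Finset.sum_const, Finset.card_univ, Fintype.card_fin,
          nsmul_eq_mul, Finset.sum_ite_eq' Finset.univ l (fun _ => ((L:ℝ):ℂ)),
          if_pos (Finset.mem_univ l)]
      simp only [this]
      rw [Finset.sum_const, Finset.card_univ, Fintype.card_fin, nsmul_eq_mul]
      have hc' : (M:ℝ) * ((M:ℝ) * c + L) = (d:ℝ) := by
        rw [hcdef, hLdef]; field_simp; ring
      have hc'' := congrArg (fun r : ℝ => (r : ℂ)) hc'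
      push_cast at hc''
      exact hc''
    have h0 : ((∑ k, E α k - 1)ᴴ * (∑ k, E α k - 1)).trace = 0 := by
      rw [conjTranspose_sub, hFh, conjTranspose_one]
      have expand : (∑ k, E α k - 1) * (∑ k, E α k - 1)
          = (∑ k, E α k) * (∑ k, E α k) - (∑ k, E α k) - (∑ k, E α k) + 1 := by
        noncomm_ring
      rw [expand, trace_add, trace_sub, trace_sub, hFF, hFtr, trace_one]
      simp [Fintype.card_fin]
    have := aux_trace_zero _ h0
    rwa [sub_eq_zero] at this
  -- the key frame computation
  have hkey : ∀ (w : Fin N → Fin M → ℂ), (∀ α, ∑ k, w α k = 0) → ∀ β l,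
      (E β l * (∑ α, ∑ k, w α k • E α k)).trace = (L : ℂ) * w β l := by
    intro w hw β l
    have expand : E β l * (∑ α, ∑ k, w α k • E α k)
        = ∑ α, ∑ k, w α k • (E β l * E α k) := by
      rw [Matrix.mul_sum]
      exact Finset.sum_congr rfl fun α _ => by
        rw [Matrix.mul_sum]
        exact Finset.sum_congr rfl fun k _ => by rw [Matrix.mul_smul]
    rw [expand, trace_sum]
    simp only [trace_sum, trace_smul, smul_eq_mul]
    rw [Finset.sum_eq_single β]
    · simp only [hEE β l]
      rw [Finset.sum_congr rfl (fun k _ => mul_add (w β k) _ _), Finset.sum_add_distrib,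
        ← Finset.sum_mul, hw β, zero_mul, zero_add]
      simp only [mul_ite, mul_zero]
      rw [Finset.sum_ite_eq' Finset.univ l (fun k => w β k * ((L:ℝ):ℂ)),
        if_pos (Finset.mem_univ l)]
      exact mul_comm _ _
    · intro α _ hαβ
      have : ∀ k : Fin M, (E β l * E α k).trace = (((d : ℝ) / M ^ 2 : ℝ) : ℂ) :=
        fun k => htrab β α l k (fun hh => hαβ hh.symm)
      simp only [this, ← Finset.sum_mul, hw α, zero_mul]
    · intro h; exact absurd (Finset.mem_univ β) h
  -- the linear map T
  let T : Matrix (Fin d) (Fin d) ℂ →ₗ[ℂ] (Fin N × Fin M → ℂ) :=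
    { toFun := fun X p => (E p.1 p.2 * X).trace
      map_add' := fun X Y => by funext p; simp [Matrix.mul_add]
      map_smul' := fun a X => by funext p; simp [Matrix.mul_smul] }
  have hmemW : ∀ w : (Fin N × Fin M → ℂ), (∀ α, ∑ k, w (α, k) = 0) →
      w ∈ LinearMap.range T := by
    intro w hw
    refine ⟨(L : ℂ)⁻¹ • ∑ α, ∑ k, w (α, k) • E α k, ?_⟩
    funext p
    have hk := hkey (fun α k => w (α, k)) hw p.1 p.2
    show (E p.1 p.2 * ((L:ℂ)⁻¹ • ∑ α, ∑ k, w (α, k) • E α k)).trace = w p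
    rw [Matrix.mul_smul, trace_smul, hk, smul_eq_mul]
    rw [← mul_assoc, inv_mul_cancel₀ hL0, one_mul]
  have honemem : (fun _ : Fin N × Fin M => (1:ℂ)) ∈ LinearMap.range T := by
    refine ⟨((M : ℂ) / (d : ℂ)) • 1, ?_⟩
    funext p
    show (E p.1 p.2 * (((M : ℂ) / (d : ℂ)) • 1)).trace = 1
    rw [Matrix.mul_smul, Matrix.mul_one, trace_smul, htr, smul_eq_mul]
    have hdC : (d : ℂ) ≠ 0 := by exact_mod_cast hd0
    have hMC : (M : ℂ) ≠ 0 := by exact_mod_cast hM0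
    push_cast
    field_simp
  -- the block-sum linear map B
  let B : (Fin N × Fin M → ℂ) →ₗ[ℂ] (Fin N → ℂ) :=
    { toFun := fun w α => ∑ k, w (α, k)
      map_add' := fun v w => by funext α; simp [Finset.sum_add_distrib]
      map_smul' := fun a w => by funext α; simp [Finset.mul_sum] }
  have hBsurj : Function.Surjective B := by
    intro y
    refine ⟨fun p => y p.1 / M, ?_⟩
    funext α
    show (∑ _k : Fin M, y α / M) = y α
    rw [Finset.sum_const, Finset.card_univ, Fintype.card_fin, nsmul_eq_mul]
    have hMC : (M : ℂ) ≠ 0 := by exact_mod_cast hM0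
    field_simp
  -- dimension computations
  have hrkB := LinearMap.finrank_range_add_finrank_ker B
  rw [LinearMap.range_eq_top.mpr hBsurj, finrank_top] at hrkB
  have hpi1 : Module.finrank ℂ (Fin N → ℂ) = N := by simp
  have hpi2 : Module.finrank ℂ (Fin N × Fin M → ℂ) = N * M := by simp
  rw [hpi1, hpi2] at hrkB
  set u : Fin N × Fin M → ℂ := fun _ => 1 with hu
  have hune : u ≠ 0 := by
    intro h
    have := congrFun h (⟨0, hNpos⟩, ⟨0, hMN⟩)
    simp [hu] at this
  have hinf : LinearMap.ker B ⊓ Submodule.span ℂ {u} = ⊥ := by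
    rw [eq_bot_iff]
    rintro w ⟨hw1, hw2⟩
    obtain ⟨a, rfl⟩ := Submodule.mem_span_singleton.mp hw2
    have hb : (∑ k : Fin M, (a • u) (⟨0, hNpos⟩, k)) = 0 :=
      congrFun (LinearMap.mem_ker.mp hw1) ⟨0, hNpos⟩
    have : (M : ℂ) * a = 0 := by
      have h5 : (∑ _k : Fin M, a) = 0 := by simpa [hu] using hb
      rwa [Finset.sum_const, Finset.card_univ, Fintype.card_fin, nsmul_eq_mul] at h5
    have hMC : (M : ℂ) ≠ 0 := by exact_mod_cast hM0
    have ha : a = 0 := by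
      rcases mul_eq_zero.mp this with h | h
      · exact absurd h hMC
      · exact h
    simp [ha]
  have hsup := Submodule.finrank_sup_add_finrank_inf_eq (LinearMap.ker B)
    (Submodule.span ℂ {u})
  rw [hinf, finrank_bot, add_zero, finrank_span_singleton hune] at hsup
  -- arithmetic: finrank (ker B ⊔ span u) = d^2
  have hMsub : N * M = N * (M - 1) + N := by
    have : M - 1 + 1 = M := Nat.succ_pred_eq_of_pos hMN
    calc N * M = N * ((M - 1) + 1) := by rw [this]
    _ = N * (M - 1) + N := by ring
  have hUrank : Module.finrank ℂ ↥(LinearMap.ker B ⊔ Submodule.span ℂ {u}) = d ^ 2 := by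
    omega
  -- T is injective
  have hrkT := LinearMap.finrank_range_add_finrank_ker T
  have hUle : LinearMap.ker B ⊔ Submodule.span ℂ {u} ≤ LinearMap.range T := by
    apply sup_le
    · intro w hw
      apply hmemW
      intro α
      exact congrFun (LinearMap.mem_ker.mp hw) α
    · rw [Submodule.span_le, Set.singleton_subset_iff]
      exact honemem
  have hUleR : d ^ 2 ≤ Module.finrank ℂ (LinearMap.range T) := by
    rw [← hUrank]; exact Submodule.finrank_mono hUle
  have hmat : Module.finrank ℂ (Matrix (Fin d) (Fin d) ℂ) = d ^ 2 := by
    rw [Module.finrank_matrix]; simp [pow_two]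
  rw [hmat] at hrkT
  have hkerT : LinearMap.ker T = ⊥ := by
    have : Module.finrank ℂ (LinearMap.ker T) = 0 := by omega
    exact Submodule.finrank_eq_zero.mp this
  have hinj : ∀ τ : Matrix (Fin d) (Fin d) ℂ,
      (∀ α k, (E α k * τ).trace = 0) → τ = 0 := by
    intro τ hτ
    have : T τ = 0 := funext fun p => hτ p.1 p.2
    have := LinearMap.mem_ker.mpr this
    rw [hkerT] at this
    simpa using this
  -- assemble
  set σ : Matrix (Fin d) (Fin d) ℂ := vecMulVec t (star s) with hσ
  have hσtr : σ.trace = 0 := by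
    have : σ.trace = star s ⬝ᵥ t := by
      simp [hσ, Matrix.trace, Matrix.diag, vecMulVec_apply, dotProduct]
      exact Finset.sum_congr rfl fun i _ => mul_comm _ _
    rw [this, hst]
  set v : Fin N → Fin M → ℂ := fun α k => (E α k * σ).trace with hv
  have hblock : ∀ α, ∑ k, v α k = 0 := by
    intro α
    have : ∑ k, v α k = ((∑ k, E α k) * σ).trace := by
      rw [Finset.sum_mul, trace_sum]
    rw [this, sumE α, Matrix.one_mul, hσtr]
  set W : Matrix (Fin d) (Fin d) ℂ := ∑ α, ∑ k, v α k • E α k with hWdef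
  have hW : ∀ β l, (E β l * W).trace = (L : ℂ) * v β l := hkey v hblock
  have hτzero : σ - (L : ℂ)⁻¹ • W = 0 := by
    apply hinj
    intro α k
    rw [Matrix.mul_sub, trace_sub, Matrix.mul_smul, trace_smul, hW, smul_eq_mul,
      ← mul_assoc, inv_mul_cancel₀ hL0, one_mul]
    simp [hv]
  have hWσ : W = (L : ℂ) • σ := by
    have hσW : σ = (L : ℂ)⁻¹ • W := by rwa [sub_eq_zero] at hτzero
    rw [hσW, smul_smul, mul_inv_cancel₀ hL0, one_smul]
  -- trace of σᴴ σ
  have htrσσ : (σᴴ * σ).trace = 1 := by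
    have e1 : (σᴴ * σ).trace = ∑ j, ∑ i, (starRingEnd ℂ) (σ i j) * σ i j := by
      simp [Matrix.trace, Matrix.diag, Matrix.mul_apply, conjTranspose_apply]
    have e2 : ∀ j i : Fin d, (starRingEnd ℂ) (σ i j) * σ i j
        = ((starRingEnd ℂ) (t i) * t i) * ((starRingEnd ℂ) (s j) * s j) := by
      intro j i
      simp only [hσ, vecMulVec_apply, Pi.star_apply, Complex.star_def, _root_.map_mul,
        Complex.conj_conj]
      ring
    rw [e1]
    simp only [e2]
    have e3 : ∀ j : Fin d, ∑ i, ((starRingEnd ℂ) (t i) * t i) * ((starRingEnd ℂ) (s j) * s j)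
        = (star t ⬝ᵥ t) * ((starRingEnd ℂ) (s j) * s j) := by
      intro j
      rw [← Finset.sum_mul]
      rfl
    simp only [e3, ht, one_mul]
    rw [← hs]
    rfl
  -- conjugates
  have hconj : ∀ α k, (starRingEnd ℂ) (v α k) = (σᴴ * E α k).trace := by
    intro α k
    have : ((E α k * σ)ᴴ).trace = star ((E α k * σ).trace) := trace_conjTranspose _
    rw [conjTranspose_mul, hherm] at this
    rw [hv]
    exact this.symm
  -- final computation over ℂ
  have hsum : (∑ α, ∑ k, (v α k) * (starRingEnd ℂ) (v α k)) = ((L : ℝ) : ℂ) := by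
    have h1 : (∑ α, ∑ k, (v α k) * (starRingEnd ℂ) (v α k))
        = (σᴴ * W).trace := by
      rw [hWdef, Matrix.mul_sum, trace_sum]
      refine Finset.sum_congr rfl fun α _ => ?_
      rw [Matrix.mul_sum, trace_sum]
      refine Finset.sum_congr rfl fun k _ => ?_
      rw [Matrix.mul_smul, trace_smul, smul_eq_mul, hconj]
    rw [h1, hWσ, Matrix.mul_smul, trace_smul, htrσσ, smul_eq_mul, mul_one]
  -- conclude
  have hdot : ∀ α k, star s ⬝ᵥ (E α k *ᵥ t) = v α k := by
    intro α k; rw [aux_dot_trace, hv, hσ]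
  have hterm : ∀ α k, ((‖star s ⬝ᵥ (E α k *ᵥ t)‖ ^ 2 : ℝ) : ℂ)
      = v α k * (starRingEnd ℂ) (v α k) := by
    intro α k
    rw [hdot α k, Complex.sq_norm, ← Complex.mul_conj]
  have final : ((∑ α, ∑ k, ‖star s ⬝ᵥ (E α k *ᵥ t)‖ ^ 2 : ℝ) : ℂ)
      = ((L : ℝ) : ℂ) := by
    rw [Complex.ofReal_sum]
    rw [← hsum]
    refine Finset.sum_congr rfl fun α _ => ?_
    rw [Complex.ofReal_sum]
    exact Finset.sum_congr rfl fun k _ => hterm α k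
  exact Complex.ofReal_injective final
end
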